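/- Let a and b be independent random vectors, with a uniformly distributed on the open ball of radius s in ℝ^m and b uniformly distributed on the open ball of radius s in ℝ^n. Let X be an m×n real matrix of rank 1 with singular value σ₁ > 0. Then for every δ > 0, P[|aᵀXb| ≤ δ] ≤ δ · D · (1/σ₁) · ( (2/s²) + (2/s²)·log max(s²σ₁/δ, 1) ), where D = 2V(n−1,1)V(m−1,1)/(V(m,1)V(n,1)) and V(k,1) is the volume of the unit ball in ℝ^k. -/

import Mathlib

open MeasureTheory Filter Set
attribute [local instance] Matrix.frobeniusNormedAddCommGroup Matrix.frobeniusNormedSpace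

noncomputable instance (m n : ℕ) : MeasureSpace (Matrix (Fin m) (Fin n) ℝ) :=
  inferInstanceAs (MeasureSpace ((Fin m) → (Fin n) → ℝ))

/-- covering number by open balls of radius ρ -/
noncomputable def covN {E : Type*} [PseudoMetricSpace E] (S : Set E) (ρ : ℝ) : ℕ :=
  sInf {k : ℕ | ∃ t : Finset E, t.card = k ∧ S ⊆ ⋃ x ∈ t, Metric.ball x ρ}

noncomputable def dimUpper {E : Type*} [PseudoMetricSpace E] (S : Set E) : ℝ :=
  limsup (fun ρ : ℝ => Real.log (covN S ρ) / Real.log (1/ρ)) (nhdsWithin 0 (Set.Ioi 0))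

noncomputable def dimLower {E : Type*} [PseudoMetricSpace E] (S : Set E) : ℝ :=
  liminf (fun ρ : ℝ => Real.log (covN S ρ) / Real.log (1/ρ)) (nhdsWithin 0 (Set.Ioi 0))

/-- singular values (unsorted, with multiplicity) -/
noncomputable def singVals {m n : ℕ} (X : Matrix (Fin m) (Fin n) ℝ) : Fin n → ℝ :=
  fun i => Real.sqrt (((by simpa [Matrix.conjTranspose_eq_transpose_of_trivial] using
    Matrix.isHermitian_conjTranspose_mul_self X : (X.transpose * X).IsHermitian)).eigenvalues i)

noncomputable def sigma1 {m n : ℕ} (X : Matrix (Fin m) (Fin n) ℝ) : ℝ :=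
  ⨆ i, singVals X i

open scoped Classical in
/-- product of nonzero singular values -/
noncomputable def Delta {m n : ℕ} (X : Matrix (Fin m) (Fin n) ℝ) : ℝ :=
  ∏ i ∈ Finset.univ.filter (fun i => singVals X i ≠ 0), singVals X i

/-- volume of the unit ball in ℝ^k -/
noncomputable def VB (k : ℕ) : ℝ :=
  (volume (Metric.ball (0 : EuclideanSpace ℝ (Fin k)) 1)).toReal

/-- surface area of unit sphere in ℝ^r : A(r-1,1) = r * V(r,1) -/
noncomputable def ASurf (r : ℕ) : ℝ := r * VB r

/-- uniform distribution on the open ball of radius s in E -/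
noncomputable def unifBall (E : Type*) [MeasureSpace E] [PseudoMetricSpace E] [Zero E] (s : ℝ) : Measure E :=
  (volume (Metric.ball (0 : E) s))⁻¹ • volume.restrict (Metric.ball (0:E) s)

/-!
A rank-one matrix is `X = σ₁ u vᵀ` with unit vectors `u`, `v`, so `aᵀ X b = σ₁ ⟪u, a⟫ ⟪v, b⟫`.
Slicing the ball of radius `s` in `ℝ^k` orthogonally to a unit vector, every slice lies in a ball
of radius `s` in `ℝ^(k-1)`; hence `⟪u, a⟫` has a density on `(-s, s)` bounded by
`V(k-1, s) / V(k, s) = V(k-1, 1) / (s V(k, 1))`. The problem is thereby reduced to the Lebesgue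
measure of `{|xy| ≤ ε}` in the square `(-s, s)²`, whose slice at `x` has length
`2 min(s, ε/|x|)`; integrating gives `4ε (1 + log max(s²/ε, 1))`.
-/

open Matrix Metric
open scoped InnerProductSpace

theorem Matrix.exists_eq_vecMulVec_of_rank_eq_one {K m n : Type*} [Field K] [Fintype m]
    [Fintype n] [DecidableEq n] {X : Matrix m n K} (hX : X.rank = 1) :
    ∃ (w : m → K) (a : n → K), X = vecMulVec w a := by
  obtain ⟨w, -, hw⟩ :=
    finrank_eq_one_iff'.mp (hX : Module.finrank K (LinearMap.range X.mulVecLin) = 1)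
  choose a ha using fun j => hw ⟨X *ᵥ Pi.single j 1, Pi.single j 1, rfl⟩
  refine ⟨w, a, ext fun i j => ?_⟩
  have := congrFun (congrArg Subtype.val (ha j)) i
  simp only [SetLike.val_smul, Pi.smul_apply, smul_eq_mul, mulVec_single_one, col_apply] at this
  rw [vecMulVec_apply, ← this, mul_comm]

theorem Matrix.dotProduct_vecMulVec_mulVec {R m n : Type*} [CommSemiring R] [Fintype m]
    [Fintype n] (x w : m → R) (a y : n → R) :
    x ⬝ᵥ (vecMulVec w a *ᵥ y) = (x ⬝ᵥ w) * (a ⬝ᵥ y) := by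
  rw [vecMulVec_mulVec, op_smul_eq_smul, dotProduct_smul, smul_eq_mul, mul_comm]

theorem trace_transpose_mul_self_vecMulVec {m n : Type*} [Fintype m] [Fintype n]
    (w : EuclideanSpace ℝ m) (a : EuclideanSpace ℝ n) :
    ((vecMulVec w a)ᵀ * vecMulVec w a).trace = ‖w‖ ^ 2 * ‖a‖ ^ 2 := by
  simp only [trace, diag_apply, mul_apply, transpose_apply, vecMulVec_apply,
    EuclideanSpace.real_norm_sq_eq, Finset.sum_mul_sum]
  rw [Finset.sum_comm]
  exact Finset.sum_congr rfl fun i _ => Finset.sum_congr rfl fun j _ => by ring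

theorem sigma1_eq_sqrt_trace_of_rank_eq_one {m n : ℕ} {X : Matrix (Fin m) (Fin n) ℝ}
    (hX : X.rank = 1) : sigma1 X = √(Xᵀ * X).trace := by
  have hA : (Xᴴ * X).IsHermitian := isHermitian_conjTranspose_mul_self X
  have hcard : Fintype.card {i // hA.eigenvalues i ≠ 0} = 1 := by
    rw [← hA.rank_eq_card_non_zero_eigs, rank_conjTranspose_mul_self, hX]
  obtain ⟨⟨i₀, _⟩, hi₀⟩ := Fintype.card_eq_one_iff.mp hcard
  have hzero : ∀ i, i ≠ i₀ → hA.eigenvalues i = 0 := fun i hi => by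
    by_contra h; exact hi (congrArg Subtype.val (hi₀ ⟨i, h⟩))
  have htrace : (Xᵀ * X).trace = hA.eigenvalues i₀ := by
    rw [← conjTranspose_eq_transpose_of_trivial, hA.trace_eq_sum_eigenvalues,
      Finset.sum_eq_single i₀ (fun i _ hi => by simp only [hzero i hi, RCLike.ofReal_zero])
        (by simp)]
    rfl
  have hsv : ∀ i, singVals X i = if i = i₀ then √(hA.eigenvalues i₀) else 0 := by
    intro i
    split_ifs with h
    · subst h; rfl
    · exact (congrArg Real.sqrt (hzero i h)).trans Real.sqrt_zero
  have : Nonempty (Fin n) := ⟨i₀⟩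
  rw [htrace, sigma1]
  refine le_antisymm (ciSup_le fun i => ?_) ?_
  · rw [hsv]; split_ifs
    · exact le_rfl
    · positivity
  · calc √(hA.eigenvalues i₀) = singVals X i₀ := by rw [hsv, if_pos rfl]
      _ ≤ ⨆ i, singVals X i := le_ciSup (Set.finite_range (singVals X)).bddAbove i₀

theorem exists_eq_sigma1_smul_vecMulVec_of_rank_eq_one {m n : ℕ}
    {X : Matrix (Fin m) (Fin n) ℝ} (hX : X.rank = 1) :
    0 < sigma1 X ∧ ∃ (u : EuclideanSpace ℝ (Fin m)) (v : EuclideanSpace ℝ (Fin n)),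
      ‖u‖ = 1 ∧ ‖v‖ = 1 ∧ X = sigma1 X • vecMulVec u v := by
  obtain ⟨w, a, rfl⟩ := exists_eq_vecMulVec_of_rank_eq_one hX
  have hσ : sigma1 (vecMulVec w a) = ‖WithLp.toLp 2 w‖ * ‖WithLp.toLp 2 a‖ := by
    have htr := trace_transpose_mul_self_vecMulVec (WithLp.toLp 2 w) (WithLp.toLp 2 a)
    rw [WithLp.ofLp_toLp, WithLp.ofLp_toLp] at htr
    rw [sigma1_eq_sqrt_trace_of_rank_eq_one hX, htr, ← mul_pow, Real.sqrt_sq (by positivity)]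
  have hw : WithLp.toLp 2 w ≠ 0 := fun h => by simp_all
  have ha : WithLp.toLp 2 a ≠ 0 := fun h => by
    have : vecMulVec w a = 0 := by ext i j; simp_all [vecMulVec_apply]
    simp_all
  refine ⟨hσ ▸ by positivity, ‖WithLp.toLp 2 w‖⁻¹ • WithLp.toLp 2 w,
    ‖WithLp.toLp 2 a‖⁻¹ • WithLp.toLp 2 a, norm_smul_inv_norm hw, norm_smul_inv_norm ha, ?_⟩
  ext i j
  have := norm_ne_zero_iff.mpr hw
  have := norm_ne_zero_iff.mpr ha
  simp only [hσ, Matrix.smul_apply, vecMulVec_apply, Pi.smul_apply, smul_eq_mul, WithLp.ofLp_smul]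
  field_simp

theorem VB_pos (k : ℕ) : 0 < VB k :=
  ENNReal.toReal_pos (measure_ball_pos volume 0 one_pos).ne' measure_ball_lt_top.ne

theorem volume_ball_euclideanSpace (k : ℕ) {s : ℝ} (hs : 0 < s) :
    volume (ball (0 : EuclideanSpace ℝ (Fin k)) s) = ENNReal.ofReal (VB k * s ^ k) := by
  rw [Measure.addHaar_ball_of_pos _ _ hs, finrank_euclideanSpace_fin, VB,
    ENNReal.ofReal_mul (by positivity), ENNReal.ofReal_toReal measure_ball_lt_top.ne, mul_comm]

theorem volume_ball_inv_mul_volume_ball_pred (k : ℕ) {s : ℝ} (hs : 0 < s) :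
    (volume (ball (0 : EuclideanSpace ℝ (Fin (k + 1))) s))⁻¹ *
        volume (ball (0 : EuclideanSpace ℝ (Fin k)) s) =
      ENNReal.ofReal (VB k / (VB (k + 1) * s)) := by
  have hpos : 0 < VB (k + 1) * s ^ (k + 1) := by have := VB_pos (k + 1); positivity
  rw [volume_ball_euclideanSpace _ hs, volume_ball_euclideanSpace _ hs,
    ← ENNReal.ofReal_inv_of_pos hpos, ← ENNReal.ofReal_mul (inv_pos.mpr hpos).le]
  congr 1
  field_simp
  ring

section Slab

variable {E : Type*} [NormedAddCommGroup E] [InnerProductSpace ℝ E] [FiniteDimensional ℝ E]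
  [MeasurableSpace E] [BorelSpace E]

theorem volume_inner_preimage_inter_ball_le {k : ℕ} (hE : Module.finrank ℝ E = k + 1) {u : E}
    (hu : ‖u‖ = 1) {A : Set ℝ} (hA : MeasurableSet A) (s : ℝ) :
    volume ((⟪u, ·⟫_ℝ) ⁻¹' A ∩ ball 0 s) ≤
      volume A * volume (ball (0 : EuclideanSpace ℝ (Fin k)) s) := by
  obtain ⟨b, hb⟩ := Orthonormal.exists_orthonormalBasis_extension_of_card_eq (𝕜 := ℝ) (by simp [hE])
    (v := fun _ : Fin (k + 1) => u) (s := {0}) (orthonormal_subsingleton_iff.mpr fun _ => hu)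
  have hb0 : b 0 = u := hb 0 rfl
  -- `φ x` is the `b`-coordinate vector of `x`, split into its first entry and the rest
  set φ : E → ℝ × EuclideanSpace ℝ (Fin k) :=
    Prod.map id (MeasurableEquiv.toLp 2 _) ∘ MeasurableEquiv.piFinSuccAbove (fun _ => ℝ) 0 ∘
      (MeasurableEquiv.toLp 2 _).symm ∘ b.repr
  have hφ : MeasurePreserving φ volume (volume.prod volume) :=
    ((MeasurePreserving.id volume).prod
      (EuclideanSpace.volume_preserving_symm_measurableEquiv_toLp _).symm).comp
    ((measurePreserving_piFinSuccAbove (fun _ => volume) 0).comp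
      ((EuclideanSpace.volume_preserving_symm_measurableEquiv_toLp _).comp
        b.measurePreserving_repr))
  have hsub : (⟪u, ·⟫_ℝ) ⁻¹' A ∩ ball 0 s ⊆ φ ⁻¹' (A ×ˢ ball 0 s) := by
    rintro x ⟨hxA, hxs⟩
    refine ⟨?_, ?_⟩
    · simpa [φ, b.repr_apply_apply, hb0] using hxA
    · have hnorm : ‖(φ x).2‖ ^ 2 ≤ ‖x‖ ^ 2 := by
        rw [← b.repr.norm_map x, EuclideanSpace.real_norm_sq_eq, EuclideanSpace.real_norm_sq_eq,
          Fin.sum_univ_succ]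
        simpa [φ, Fin.tail] using sq_nonneg (b.repr x 0)
      rw [mem_ball_zero_iff] at hxs ⊢
      exact ((pow_le_pow_iff_left₀ (norm_nonneg _) (norm_nonneg _) two_ne_zero).mp hnorm).trans_lt
        hxs
  calc volume ((⟪u, ·⟫_ℝ) ⁻¹' A ∩ ball 0 s) ≤ volume (φ ⁻¹' (A ×ˢ ball 0 s)) := measure_mono hsub
    _ = volume A * volume (ball (0 : EuclideanSpace ℝ (Fin k)) s) := by
      rw [hφ.measure_preimage (hA.prod measurableSet_ball).nullMeasurableSet, Measure.prod_prod]

theorem map_inner_unifBall_le {k : ℕ} (hE : Module.finrank ℝ E = k + 1) {u : E}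
    (hu : ‖u‖ = 1) (s : ℝ) :
    (unifBall E s).map (⟪u, ·⟫_ℝ) ≤
      ((volume (ball (0 : E) s))⁻¹ * volume (ball (0 : EuclideanSpace ℝ (Fin k)) s)) •
        volume.restrict (Ioo (-s) s) := by
  have hf : Measurable (⟪u, ·⟫_ℝ) := (continuous_const.inner continuous_id).measurable
  refine Measure.le_iff.mpr fun A hA => ?_
  rw [Measure.map_apply hf hA, unifBall, Measure.smul_apply, Measure.restrict_apply (hf hA),
    Measure.smul_apply, Measure.restrict_apply hA, smul_eq_mul, smul_eq_mul, mul_assoc]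
  gcongr
  calc volume ((⟪u, ·⟫_ℝ) ⁻¹' A ∩ ball 0 s)
      ≤ volume ((⟪u, ·⟫_ℝ) ⁻¹' (A ∩ Ioo (-s) s) ∩ ball 0 s) := by
        refine measure_mono fun x ⟨hxA, hxs⟩ => ⟨⟨hxA, abs_lt.mp ?_⟩, hxs⟩
        rw [mem_ball_zero_iff] at hxs
        exact (abs_real_inner_le_norm u x).trans_lt (by rwa [hu, one_mul])
    _ ≤ _ := volume_inner_preimage_inter_ball_le hE hu (hA.inter measurableSet_Ioo) s
    _ = _ := mul_comm _ _

end Slab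

instance {E : Type*} [MeasureSpace E] [SFinite (volume : Measure E)] [PseudoMetricSpace E] [Zero E]
    (s : ℝ) : SFinite (unifBall E s) := by
  unfold unifBall; infer_instance

theorem MeasureTheory.Measure.prod_preimage_prodMap_le {α β γ δ : Type*} [MeasurableSpace α]
    [MeasurableSpace β] [MeasurableSpace γ] [MeasurableSpace δ] {μ : Measure α} {ν : Measure β} {μ' : Measure γ}
    {ν' : Measure δ} [SFinite μ] [SFinite ν] [SFinite ν'] {f : α → γ} {g : β → δ}
    (hf : Measurable f) (hg : Measurable g) {a b : ENNReal} (hμ : μ.map f ≤ a • μ')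
    (hν : ν.map g ≤ b • ν') {S : Set (γ × δ)} (hS : MeasurableSet S) :
    μ.prod ν (Prod.map f g ⁻¹' S) ≤ a * b * μ'.prod ν' S := by
  rw [← Measure.map_apply (hf.prodMap hg) hS, ← Measure.map_prod_map _ _ hf hg]
  calc (μ.map f).prod (ν.map g) S ≤ (a • μ').prod (b • ν') S := Measure.prod_mono hμ hν S
    _ = a * b * μ'.prod ν' S := by
      rw [Measure.prod_smul_left, Measure.prod_smul_right, smul_smul, Measure.smul_apply,
        smul_eq_mul]

theorem volume_setOf_abs_mul_le_inter_Ioo_le {t : ℝ} (ht : t ≠ 0) (s ε : ℝ) :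
    volume ({τ | |t * τ| ≤ ε} ∩ Ioo (-s) s) ≤ ENNReal.ofReal (2 * min s (ε / |t|)) := by
  rw [mul_min_of_nonneg _ _ zero_le_two, ENNReal.ofReal_min]
  refine le_min ((measure_mono inter_subset_right).trans ?_)
    ((measure_mono (t := Icc (-(ε / |t|)) (ε / |t|))
      (inter_subset_left.trans fun τ hτ => ?_)).trans ?_)
  · rw [Real.volume_Ioo]; exact ENNReal.ofReal_le_ofReal (by linarith)
  · exact abs_le.mp ((le_div_iff₀ (abs_pos.mpr ht)).mpr (by rwa [mul_comm, ← abs_mul]))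
  · rw [Real.volume_Icc]; exact ENNReal.ofReal_le_ofReal (by linarith)

theorem intervalIntegrable_min_div_abs {s ε : ℝ} (hs : 0 ≤ s) (hε : 0 ≤ ε) (a b : ℝ) :
    IntervalIntegrable (fun t => min s (ε / |t|)) volume a b :=
  (intervalIntegrable_const (c := s)).mono_fun
    (measurable_const.min (measurable_const.div measurable_abs)).aestronglyMeasurable
    (ae_of_all _ fun t => by
      dsimp only
      rw [Real.norm_of_nonneg (le_min hs (by positivity)), Real.norm_of_nonneg hs]
      exact min_le_left _ _)

theorem integral_min_div_abs_le {s ε : ℝ} (hs : 0 < s) (hε : 0 < ε) :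
    ∫ t in (0 : ℝ)..s, min s (ε / |t|) ≤ ε * (1 + Real.log (max (s ^ 2 / ε) 1)) := by
  have hL : 0 ≤ Real.log (max (s ^ 2 / ε) 1) := Real.log_nonneg (le_max_right _ _)
  have hint := intervalIntegrable_min_div_abs hs.le hε.le
  rcases le_or_gt (s ^ 2) ε with hsε | hεs
  · calc ∫ t in (0 : ℝ)..s, min s (ε / |t|) ≤ ∫ t in (0 : ℝ)..s, s :=
          intervalIntegral.integral_mono_on hs.le (hint ..) intervalIntegrable_const
            fun t _ => min_le_left _ _
      _ = s ^ 2 := by simp [sq]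
      _ ≤ ε * (1 + Real.log (max (s ^ 2 / ε) 1)) := by nlinarith
  · have ht₀ : 0 < ε / s := div_pos hε hs
    have ht₀s : ε / s < s := by rw [div_lt_iff₀ hs]; nlinarith
    have hmax : max (s ^ 2 / ε) 1 = s / (ε / s) := by
      rw [max_eq_left ((one_le_div hε).mpr hεs.le)]; field_simp
    calc ∫ t in (0 : ℝ)..s, min s (ε / |t|)
        = (∫ t in (0 : ℝ)..ε / s, min s (ε / |t|)) + ∫ t in ε / s..s, min s (ε / |t|) :=
          (intervalIntegral.integral_add_adjacent_intervals (hint ..) (hint ..)).symm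
      _ ≤ (∫ t in (0 : ℝ)..ε / s, s) + ∫ t in ε / s..s, ε * t⁻¹ := by
          gcongr
          · exact intervalIntegral.integral_mono_on ht₀.le (hint ..) intervalIntegrable_const
              fun t _ => min_le_left _ _
          · refine intervalIntegral.integral_mono_on ht₀s.le (hint ..)
              ((intervalIntegral.intervalIntegrable_inv (fun t ht => ?_)
                continuousOn_id).const_mul ε) fun t ht => ?_
            · exact (ht₀.trans_le (uIcc_of_le ht₀s.le ▸ ht).1).ne'
            · rw [abs_of_pos (ht₀.trans_le ht.1), ← div_eq_mul_inv]
              exact min_le_right _ _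
      _ = ε * (1 + Real.log (max (s ^ 2 / ε) 1)) := by
          rw [intervalIntegral.integral_const, intervalIntegral.integral_const_mul,
            integral_inv_of_pos ht₀ hs, hmax, sub_zero, smul_eq_mul, div_mul_cancel₀ _ hs.ne']
          ring

theorem restrict_Ioo_prod_setOf_abs_mul_le {s ε : ℝ} (hs : 0 < s) (hε : 0 < ε) :
    (volume.restrict (Ioo (-s) s)).prod (volume.restrict (Ioo (-s) s))
        {p : ℝ × ℝ | |p.1 * p.2| ≤ ε} ≤
      ENNReal.ofReal (4 * ε * (1 + Real.log (max (s ^ 2 / ε) 1))) := by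
  have hint := intervalIntegrable_min_div_abs hs.le hε.le
  have heven : ∫ t in (-s)..s, min s (ε / |t|) = 2 * ∫ t in (0 : ℝ)..s, min s (ε / |t|) := by
    rw [← intervalIntegral.integral_add_adjacent_intervals (hint (-s) 0) (hint 0 s), two_mul]
    congr 1
    simpa using (intervalIntegral.integral_comp_neg (a := 0) (b := s)
      fun t => min s (ε / |t|)).symm
  rw [Measure.prod_apply (measurableSet_le (by fun_prop) measurable_const)]
  calc ∫⁻ t in Ioo (-s) s, volume.restrict (Ioo (-s) s) {τ | |t * τ| ≤ ε}
      ≤ ∫⁻ t in Ioo (-s) s, ENNReal.ofReal (2 * min s (ε / |t|)) := by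
        refine lintegral_mono_ae ?_
        filter_upwards [ae_restrict_of_ae (compl_mem_ae_iff.mpr (measure_singleton 0))]
          with t ht
        rw [Measure.restrict_apply (measurableSet_le (by fun_prop) measurable_const)]
        exact volume_setOf_abs_mul_le_inter_Ioo_le ht s ε
    _ = ENNReal.ofReal (∫ t in Ioo (-s) s, 2 * min s (ε / |t|)) := by
        rw [ofReal_integral_eq_lintegral_ofReal]
        · exact (intervalIntegrable_iff_integrableOn_Ioo_of_le (by linarith)).mp
            ((hint (-s) s).const_mul 2)
        · exact ae_of_all _ fun t =>
            mul_nonneg zero_le_two (le_min hs.le (div_nonneg hε.le (abs_nonneg t)))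
    _ = ENNReal.ofReal (2 * (2 * ∫ t in (0 : ℝ)..s, min s (ε / |t|))) := by
        rw [← integral_Ioc_eq_integral_Ioo, ← intervalIntegral.integral_of_le (by linarith),
          intervalIntegral.integral_const_mul, heven]
    _ ≤ ENNReal.ofReal (4 * ε * (1 + Real.log (max (s ^ 2 / ε) 1))) :=
        ENNReal.ofReal_le_ofReal (by linarith [integral_min_div_abs_le hs hε])

theorem unifBall_prod_setOf_abs_inner_mul_inner_le {k l : ℕ} {s ε : ℝ} (hs : 0 < s) (hε : 0 < ε)
    {u : EuclideanSpace ℝ (Fin (k + 1))} {v : EuclideanSpace ℝ (Fin (l + 1))}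
    (hu : ‖u‖ = 1) (hv : ‖v‖ = 1) :
    (unifBall _ s).prod (unifBall _ s) {p | |⟪u, p.1⟫_ℝ * ⟪v, p.2⟫_ℝ| ≤ ε} ≤
      ENNReal.ofReal (VB k / (VB (k + 1) * s) * (VB l / (VB (l + 1) * s)) *
        (4 * ε * (1 + Real.log (max (s ^ 2 / ε) 1)))) := by
  have hpos : ∀ j, 0 ≤ VB j / (VB (j + 1) * s) := fun j => by
    have := VB_pos j; have := VB_pos (j + 1); positivity
  calc (unifBall _ s).prod (unifBall _ s) {p | |⟪u, p.1⟫_ℝ * ⟪v, p.2⟫_ℝ| ≤ ε}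
      = (unifBall _ s).prod (unifBall _ s)
          (Prod.map (⟪u, ·⟫_ℝ) (⟪v, ·⟫_ℝ) ⁻¹' {q : ℝ × ℝ | |q.1 * q.2| ≤ ε}) := rfl
    _ ≤ ENNReal.ofReal (VB k / (VB (k + 1) * s)) * ENNReal.ofReal (VB l / (VB (l + 1) * s)) *
          (volume.restrict (Ioo (-s) s)).prod (volume.restrict (Ioo (-s) s))
            {q : ℝ × ℝ | |q.1 * q.2| ≤ ε} := by
        simp only [← volume_ball_inv_mul_volume_ball_pred _ hs]
        exact Measure.prod_preimage_prodMap_le (by fun_prop) (by fun_prop)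
          (map_inner_unifBall_le (by simp) hu s) (map_inner_unifBall_le (by simp) hv s)
          (measurableSet_le (by fun_prop) measurable_const)
    _ ≤ _ := by
        rw [ENNReal.ofReal_mul (mul_nonneg (hpos k) (hpos l)), ENNReal.ofReal_mul (hpos k)]
        gcongr
        exact restrict_Ioo_prod_setOf_abs_mul_le hs hε

theorem stmt7 (m n : ℕ) (s δ : ℝ) (hs : 0 < s) (hδ : 0 < δ)
    (X : Matrix (Fin m) (Fin n) ℝ) (hX : X.rank = 1) :
    ((unifBall (EuclideanSpace ℝ (Fin m)) s).prod (unifBall (EuclideanSpace ℝ (Fin n)) s))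
        {p : EuclideanSpace ℝ (Fin m) × EuclideanSpace ℝ (Fin n) |
          |dotProduct (p.1 : Fin m → ℝ) (X.mulVec (p.2 : Fin n → ℝ))| ≤ δ}
      ≤ ENNReal.ofReal (δ * (2 * VB (n - 1) * VB (m - 1) / (VB m * VB n)) * (sigma1 X)⁻¹ *
          (2 / s ^ 2 + 2 / s ^ 2 * Real.log (max (s ^ 2 * sigma1 X / δ) 1))) := by
  obtain ⟨hσ, u, v, hu, hv, hXuv⟩ := exists_eq_sigma1_smul_vecMulVec_of_rank_eq_one hX
  obtain ⟨m', rfl⟩ := Nat.exists_eq_add_one_of_ne_zero (n := m)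
    (by rintro rfl; simp [Subsingleton.elim u 0] at hu)
  obtain ⟨n', rfl⟩ := Nat.exists_eq_add_one_of_ne_zero (n := n)
    (by rintro rfl; simp [Subsingleton.elim v 0] at hv)
  have hevent : {p : EuclideanSpace ℝ (Fin (m' + 1)) × EuclideanSpace ℝ (Fin (n' + 1)) |
      |dotProduct (p.1 : Fin (m' + 1) → ℝ) (X.mulVec (p.2 : Fin (n' + 1) → ℝ))| ≤ δ} =
      {p | |⟪u, p.1⟫_ℝ * ⟪v, p.2⟫_ℝ| ≤ δ / sigma1 X} := by
    ext ⟨x, y⟩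
    change |x ⬝ᵥ X *ᵥ y| ≤ δ ↔ |⟪u, x⟫_ℝ * ⟪v, y⟫_ℝ| ≤ δ / sigma1 X
    nth_rw 1 [hXuv]
    rw [smul_mulVec, dotProduct_smul, dotProduct_vecMulVec_mulVec, smul_eq_mul, abs_mul,
      abs_of_pos hσ, le_div_iff₀ hσ, mul_comm, EuclideanSpace.inner_eq_star_dotProduct,
      EuclideanSpace.inner_eq_star_dotProduct, star_trivial, star_trivial, dotProduct_comm y.ofLp]
  rw [hevent]
  refine (unifBall_prod_setOf_abs_inner_mul_inner_le hs (div_pos hδ hσ) hu hv).trans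
    (ENNReal.ofReal_le_ofReal (le_of_eq ?_))
  have := VB_pos (m' + 1)
  have := VB_pos (n' + 1)
  rw [div_div_eq_mul_div, Nat.add_sub_cancel, Nat.add_sub_cancel]
  field_simp
  ring
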